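/- Let A = (a_{ij})_{i,j≥1} be an arbitrary infinite complex matrix, n ≥ 0, m ≥ 1, and let I = {i_1 < i_2 < … < i_m} ⊆ {1,…,m+n}. Then the polynomial P^I_A ∈ ℂ[x_0,…,x_n], defined as the determinant of the m×m matrix whose (r,c) entry is a_{r, i_c} − x_{i_c − r} when 0 ≤ i_c − r ≤ n and a_{r, i_c} otherwise, has total degree exactly m. -/

import Mathlib

/-- Given an infinite complex matrix `A` (indices `0`-based), `n ≥ 0`, `m ≥ 1`, and a strictly
increasing sequence of column indices `i : Fin m → Fin (m+n)`, the polynomial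
`P^I_A ∈ ℂ[x_0,…,x_n]` is the determinant of the `m × m` matrix whose `(r,c)` entry is
`a_{r, i_c} - x_{i_c - r}` when `0 ≤ i_c - r ≤ n`, and `a_{r, i_c}` otherwise. -/
noncomputable def PIA (A : ℕ → ℕ → ℂ) (n m : ℕ) (i : Fin m → Fin (m + n)) :
    MvPolynomial (Fin (n + 1)) ℂ :=
  Matrix.det (Matrix.of fun r c : Fin m =>
    MvPolynomial.C (A (r : ℕ) ((i c : ℕ))) -
      if h : (r : ℕ) ≤ (i c : ℕ) ∧ (i c : ℕ) ≤ (r : ℕ) + n then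
        MvPolynomial.X (⟨(i c : ℕ) - (r : ℕ), by omega⟩ : Fin (n + 1))
      else 0)

/-!
Every entry of `A_I(x)` has degree at most one, with linear part `-G`, where `G = (x_{i_c - r})`
is the band matrix of variables. Hence the degree-`m` homogeneous component of `P^I_A` is
`det (-G)`, and it suffices to show `det G ≠ 0`. Give `x_k` the weight `k²`: the term of a
permutation `τ` in `det G` is weighted homogeneous of weight `∑_c (i_c - τ c)²`, and by the
rearrangement inequality this weight is attained by `τ = 1` alone, so the diagonal monomial
`∏_c x_{i_c - c}` cannot cancel.
-/

open MvPolynomial Finset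

namespace MvPolynomial

variable {σ R : Type*}

section CommSemiring

variable [CommSemiring R]

lemma homogeneousComponent_mul_of_totalDegree_le {p q : MvPolynomial σ R} {a b : ℕ}
    (hp : p.totalDegree ≤ a) (hq : q.totalDegree ≤ b) :
    homogeneousComponent (a + b) (p * q) = homogeneousComponent a p * homogeneousComponent b q := by
  classical
  ext d
  rw [coeff_homogeneousComponent]
  split_ifs with hd
  · rw [coeff_mul, coeff_mul]
    refine sum_congr rfl fun uv huv => ?_
    rw [HasAntidiagonal.mem_antidiagonal] at huv
    have hdeg : uv.1.degree + uv.2.degree = a + b := by rw [← map_add, huv, hd]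
    simp only [coeff_homogeneousComponent]
    by_cases hu : uv.1.degree = a
    · rw [if_pos hu, if_pos (by omega)]
    · rw [if_neg hu, zero_mul]
      rcases Nat.lt_or_gt_of_ne hu with hlt | hgt
      · rw [coeff_eq_zero_of_totalDegree_lt (hq.trans_lt (by omega : b < uv.2.degree)), mul_zero]
      · rw [coeff_eq_zero_of_totalDegree_lt (hp.trans_lt (by omega : a < uv.1.degree)), zero_mul]
  · exact (((homogeneousComponent_isHomogeneous a p).mul
      (homogeneousComponent_isHomogeneous b q)).coeff_eq_zero hd).symm

lemma homogeneousComponent_finsetProd_of_totalDegree_le {ι : Type*} (s : Finset ι)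
    (f : ι → MvPolynomial σ R) (k : ι → ℕ) (hf : ∀ c ∈ s, (f c).totalDegree ≤ k c) :
    homogeneousComponent (∑ c ∈ s, k c) (∏ c ∈ s, f c) =
      ∏ c ∈ s, homogeneousComponent (k c) (f c) := by
  classical
  induction s using Finset.cons_induction with
  | empty => simp [homogeneousComponent_zero]
  | cons c s hc ih =>
    rw [forall_mem_cons] at hf
    rw [sum_cons, prod_cons, prod_cons, homogeneousComponent_mul_of_totalDegree_le hf.1, ih hf.2]
    exact (totalDegree_finsetProd _ _).trans (sum_le_sum hf.2)

lemma totalDegree_eq_of_homogeneousComponent_ne_zero {p : MvPolynomial σ R} {k : ℕ}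
    (hp : p.totalDegree ≤ k) (hk : homogeneousComponent k p ≠ 0) : p.totalDegree = k :=
  hp.antisymm <| not_lt.mp fun hlt => hk (homogeneousComponent_eq_zero k p hlt)

end CommSemiring

variable [CommRing R] {n : Type*} [Fintype n] [DecidableEq n]

lemma totalDegree_det_le_card (M : Matrix n n (MvPolynomial σ R))
    (hM : ∀ i j, (M i j).totalDegree ≤ 1) : M.det.totalDegree ≤ Fintype.card n := by
  rw [Matrix.det_apply]
  refine (totalDegree_finsetSum _ _).trans (Finset.sup_le fun τ _ => ?_)
  rw [Units.smul_def]
  refine (totalDegree_smul_le _ _).trans ((totalDegree_finsetProd _ _).trans ?_)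
  simpa using sum_le_sum fun i (_ : i ∈ univ) => hM (τ i) i

lemma homogeneousComponent_card_det (M : Matrix n n (MvPolynomial σ R))
    (hM : ∀ i j, (M i j).totalDegree ≤ 1) :
    homogeneousComponent (Fintype.card n) M.det = (M.map (homogeneousComponent 1)).det := by
  simp only [Matrix.det_apply, map_sum, Units.smul_def, map_zsmul, Matrix.map_apply]
  refine sum_congr rfl fun τ _ => ?_
  congr 1
  simpa using
    homogeneousComponent_finsetProd_of_totalDegree_le univ (fun i => M (τ i) i) 1 fun _ _ => hM _ _

lemma totalDegree_det_map_C_sub (a : Matrix n n R) (G : Matrix n n (MvPolynomial σ R))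
    (hG : ∀ i j, (G i j).IsHomogeneous 1) (hdet : G.det ≠ 0) :
    (a.map C - G).det.totalDegree = Fintype.card n := by
  have hM (i j : n) : ((a.map C - G : Matrix n n (MvPolynomial σ R)) i j).totalDegree ≤ 1 :=
    (totalDegree_sub _ _).trans (max_le (by simp) (hG i j).totalDegree_le)
  have hlin : (a.map C - G).map (homogeneousComponent 1) = -G := by
    ext i j
    simp [homogeneousComponent_eq_self (hG i j),
      homogeneousComponent_eq_zero 1 (C (a i j)) (by simp)]
  refine totalDegree_eq_of_homogeneousComponent_ne_zero (totalDegree_det_le_card _ hM) ?_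
  rw [homogeneousComponent_card_det _ hM, hlin, Matrix.det_neg]
  exact neg_one_pow_mul_eq_zero_iff.not.mpr hdet

end MvPolynomial

lemma Equiv.Perm.eq_one_of_strictMono {ι : Type*} [LinearOrder ι] [WellFoundedLT ι]
    {τ : Equiv.Perm ι} (hτ : StrictMono τ) : τ = 1 :=
  Equiv.ext <| DFunLike.congr_fun (F := ι ≃o ι)
    (Subsingleton.elim (hτ.orderIsoOfSurjective τ τ.surjective) (OrderIso.refl ι))

section Rearrangement

variable {ι R : Type*} [LinearOrder ι] [Fintype ι] [CommRing R] [LinearOrder R]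
  [IsStrictOrderedRing R] {u v : ι → R} {τ : Equiv.Perm ι}

lemma StrictMono.sum_mul_comp_perm_lt_sum_mul (hu : StrictMono u) (hv : StrictMono v)
    (hτ : τ ≠ 1) : ∑ c, u c * v (τ c) < ∑ c, u c * v c := by
  have hmono : Monovary u v := fun a b h => (hu (hv.lt_iff_lt.mp h)).le
  refine hmono.sum_mul_comp_perm_lt_sum_mul_iff.mpr fun hτmono => hτ ?_
  refine Equiv.Perm.eq_one_of_strictMono fun a b hab => ?_
  by_contra! hba
  exact (hu hab).not_ge (hτmono (hv (hba.lt_of_ne (τ.injective.ne hab.ne'))))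

lemma StrictMono.sum_sq_sub_lt_sum_sq_sub_comp_perm (hu : StrictMono u) (hv : StrictMono v)
    (hτ : τ ≠ 1) :
    ∑ c, (u c - v c) ^ 2 < ∑ c, (u c - v (τ c)) ^ 2 := by
  have hexp (w : ι → R) :
      ∑ c, (u c - w c) ^ 2 = ∑ c, u c ^ 2 + ∑ c, w c ^ 2 - 2 * ∑ c, u c * w c := by
    simp only [sub_sq, sum_add_distrib, sum_sub_distrib, mul_sum]
    ring_nf
  rw [hexp, hexp fun c => v (τ c), Equiv.sum_comp τ (v · ^ 2)]
  linarith [hu.sum_mul_comp_perm_lt_sum_mul hv hτ]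

end Rearrangement

lemma Fin.val_le_val_of_strictMono {m k : ℕ} {f : Fin m → Fin k} (hf : StrictMono f)
    (c : Fin m) : (c : ℕ) ≤ f c := by
  have := card_le_card_of_injOn f (fun a ha => by simpa using hf.monotone (by simpa using ha))
    hf.injective.injOn (s := Iic c) (t := Iic (f c))
  simpa using this

lemma Fin.val_add_le_of_strictMono {m k : ℕ} {f : Fin m → Fin k} (hf : StrictMono f)
    (c : Fin m) : (f c : ℕ) + (m - c) ≤ k := by
  have := card_le_card_of_injOn f (fun a ha => by simpa using hf.monotone (by simpa using ha))
    hf.injective.injOn (s := Ici c) (t := Ici (f c))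
  simp only [Fin.card_Ici] at this
  have := (f c).isLt
  omega

section Band

variable (R : Type*) [CommRing R] {m n : ℕ} (i : Fin m → Fin (m + n))

noncomputable def bandVars : Matrix (Fin m) (Fin m) (MvPolynomial (Fin (n + 1)) R) :=
  Matrix.of fun r c =>
    if h : (r : ℕ) ≤ i c ∧ (i c : ℕ) ≤ r + n then X ⟨i c - r, by omega⟩ else 0

lemma isHomogeneous_bandVars (r c : Fin m) : (bandVars R i r c).IsHomogeneous 1 := by
  rw [bandVars, Matrix.of_apply]
  split_ifs
  · exact isHomogeneous_X _ _
  · exact isHomogeneous_zero _ _ _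

-- Integer weights: off the band, where the entry is `0`, `i c - r` may be negative.
lemma isWeightedHomogeneous_bandVars (r c : Fin m) :
    IsWeightedHomogeneous (fun k : Fin (n + 1) => ((k : ℕ) : ℤ) ^ 2) (bandVars R i r c)
      ((((i c : ℕ) : ℤ) - r) ^ 2) := by
  rw [bandVars, Matrix.of_apply]
  split_ifs with h
  · convert isWeightedHomogeneous_X (R := R) _ _ using 2
    push_cast [h.1]
    rfl
  · exact isWeightedHomogeneous_zero _ _ _

variable {i}

lemma weightedHomogeneousComponent_det_bandVars (hi : StrictMono i) :
    weightedHomogeneousComponent (fun k : Fin (n + 1) => ((k : ℕ) : ℤ) ^ 2)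
      (∑ c : Fin m, (((i c : ℕ) : ℤ) - c) ^ 2) (bandVars R i).det =
      ∏ c, bandVars R i c c := by
  have hprod (τ : Equiv.Perm (Fin m)) :
      IsWeightedHomogeneous (fun k : Fin (n + 1) => ((k : ℕ) : ℤ) ^ 2)
        (∏ c, bandVars R i (τ c) c) (∑ c : Fin m, (((i c : ℕ) : ℤ) - (τ c : ℕ)) ^ 2) :=
    .prod _ _ _ fun c _ => isWeightedHomogeneous_bandVars R i (τ c) c
  rw [Matrix.det_apply, map_sum, sum_eq_single 1]
  · simpa using (hprod 1).weightedHomogeneousComponent_same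
  · intro τ _ hτ
    rw [Units.smul_def, map_zsmul, (hprod τ).weightedHomogeneousComponent_ne _ ?_, smul_zero]
    have hu : StrictMono fun c : Fin m => ((i c : ℕ) : ℤ) := fun a b hab => by
      simpa using hi hab
    have hv : StrictMono fun c : Fin m => ((c : ℕ) : ℤ) := fun a b hab => by simpa using hab
    exact (hu.sum_sq_sub_lt_sum_sq_sub_comp_perm hv hτ).ne
  · simp

lemma prod_diag_bandVars_ne_zero [Nontrivial R] (hi : StrictMono i) :
    ∏ c, bandVars R i c c ≠ 0 := by
  have hband (c : Fin m) : (c : ℕ) ≤ i c ∧ (i c : ℕ) ≤ c + n := by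
    have := Fin.val_add_le_of_strictMono hi c
    exact ⟨Fin.val_le_val_of_strictMono hi c, by omega⟩
  simp only [bandVars, Matrix.of_apply, dif_pos (hband _), X, ← monomial_sum_one]
  exact monomial_eq_zero.not.mpr one_ne_zero

lemma det_bandVars_ne_zero [Nontrivial R] (hi : StrictMono i) : (bandVars R i).det ≠ 0 :=
  fun h => prod_diag_bandVars_ne_zero R hi <| by
    rw [← weightedHomogeneousComponent_det_bandVars R hi, h, map_zero]

end Band

theorem stmt1_general (A : ℕ → ℕ → ℂ) (n m : ℕ)
    (i : Fin m → Fin (m + n)) (hi : StrictMono i) :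
    (PIA A n m i).totalDegree = m := by
  have hPIA : PIA A n m i =
      ((Matrix.of fun r c : Fin m => A r (i c)).map C - bandVars ℂ i).det := rfl
  rw [hPIA, totalDegree_det_map_C_sub _ _ (isHomogeneous_bandVars ℂ i)
    (det_bandVars_ne_zero ℂ hi), Fintype.card_fin]

theorem stmt1 (A : ℕ → ℕ → ℂ) (n m : ℕ) (hm : 1 ≤ m)
    (i : Fin m → Fin (m + n)) (hi : StrictMono i) :
    (PIA A n m i).totalDegree = m :=
  stmt1_general A n m i hi
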